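/- Average drift theorem (lower bound): if a nonnegative distance function d vanishes exactly on the absorbing optimal set and for every t the average drift satisfies Δ̄_t ≤ c with c > 0, then the expected hitting time satisfies E[τ] ≥ E[d(Φ_0)]/c. -/

import Mathlib

/-!
Write `D t = E[d (Φ t)]`. Because `d` vanishes on the absorbing set `Sopt`, transitions out of
`Sopt` never happen and transitions inside it do not change `d`, so
`D t - D (t + 1) = Δ̄_t · P(Φ t ∉ Sopt) ≤ c · P(τ > t)`. Telescoping gives
`D 0 - D T ≤ c · ∑_{t < T} P(τ > t) ≤ c · E[τ]`, and `D T → 0` because `P(Φ T ∉ Sopt) → 0`.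
-/

open MeasureTheory Filter

/-- First hitting time of the set `Sopt` by the process `Φ`. -/
noncomputable def hittingTime {Ω S : Type*} (Φ : ℕ → Ω → S) (Sopt : Finset S)
    (ω : Ω) : ℕ := sInf {t | Φ t ω ∈ Sopt}

/-- Probability that the process is at state `x` at time `t`. -/
noncomputable def pstate {Ω S : Type*} [MeasurableSpace Ω] (μ : Measure Ω)
    (Φ : ℕ → Ω → S) (t : ℕ) (x : S) : ℝ := (μ {ω | Φ t ω = x}).toReal

/-- Point-wise drift at time `t` in state `x` with respect to the distance `d`:
`Δ(x) = ∑_y (d x - d y) P(Φ_{t+1} = y | Φ_t = x)`. -/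
noncomputable def drift {Ω S : Type*} [Fintype S] [DecidableEq S] [MeasurableSpace Ω]
    (μ : Measure Ω) (Φ : ℕ → Ω → S) (d : S → ℝ) (t : ℕ) (x : S) : ℝ :=
  ∑ y : S, (d x - d y) *
    ((μ {ω | Φ t ω = x ∧ Φ (t + 1) ω = y}).toReal / (μ {ω | Φ t ω = x}).toReal)

/-- Average drift at time `t`:
`Δ̄_t = ∑_{x ∉ Sopt} Δ(x) · P(Φ_t = x)/P(Φ_t ∉ Sopt)`, set to `0` when
`P(Φ_t ∉ Sopt) = 0`. -/
noncomputable def avgDrift {Ω S : Type*} [Fintype S] [DecidableEq S] [MeasurableSpace Ω]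
    (μ : Measure Ω) (Φ : ℕ → Ω → S) (Sopt : Finset S) (d : S → ℝ) (t : ℕ) : ℝ :=
  if (μ {ω | Φ t ω ∉ Sopt}).toReal = 0 then 0
  else ∑ x ∈ Soptᶜ, drift μ Φ d t x *
    (pstate μ Φ t x / (μ {ω | Φ t ω ∉ Sopt}).toReal)

open scoped Topology ENNReal

noncomputable def pjoint {Ω S : Type*} [MeasurableSpace Ω] (μ : Measure Ω) (Φ : ℕ → Ω → S)
    (t : ℕ) (x y : S) : ℝ :=
  (μ {ω | Φ t ω = x ∧ Φ (t + 1) ω = y}).toReal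

noncomputable def expectedDist {Ω S : Type*} [Fintype S] [MeasurableSpace Ω] (μ : Measure Ω)
    (Φ : ℕ → Ω → S) (d : S → ℝ) (t : ℕ) : ℝ :=
  ∑ x, d x * pstate μ Φ t x

lemma ofReal_div_le_tsum_of_sub_succ_le {D : ℕ → ℝ} {p : ℕ → ℝ≥0∞} {c : ℝ} (hc : 0 < c)
    (hD : Tendsto D atTop (𝓝 0)) (hp : ∀ t, p t ≠ ∞)
    (hstep : ∀ t, D t - D (t + 1) ≤ c * (p t).toReal) :
    ENNReal.ofReal (D 0 / c) ≤ ∑' t, p t := by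
  have hlim : Tendsto (fun T => ENNReal.ofReal ((D 0 - D T) / c)) atTop
      (𝓝 (ENNReal.ofReal (D 0 / c))) := by
    simpa using ENNReal.tendsto_ofReal (((tendsto_const_nhds (x := D 0)).sub hD).div_const c)
  refine le_of_tendsto' hlim fun T => ?_
  calc ENNReal.ofReal ((D 0 - D T) / c)
      ≤ ENNReal.ofReal (∑ t ∈ Finset.range T, (p t).toReal) := by
        gcongr
        rw [div_le_iff₀' hc, ← Finset.sum_range_sub', Finset.mul_sum]
        exact Finset.sum_le_sum fun t _ => hstep t
    _ = ∑ t ∈ Finset.range T, p t := by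
        rw [ENNReal.ofReal_sum_of_nonneg fun t _ => ENNReal.toReal_nonneg]
        exact Finset.sum_congr rfl fun t _ => ENNReal.ofReal_toReal (hp t)
    _ ≤ ∑' t, p t := ENNReal.sum_le_tsum _

lemma lintegral_natCast_eq_tsum_measure_lt {Ω : Type*} [MeasurableSpace Ω] {μ : Measure Ω}
    {N : Ω → ℕ} (hN : ∀ k, MeasurableSet {ω | k < N ω}) :
    ∫⁻ ω, (N ω : ℝ≥0∞) ∂μ = ∑' k, μ {ω | k < N ω} := by
  have hsum : ∀ ω, (N ω : ℝ≥0∞) = ∑' k, {ω | k < N ω}.indicator 1 ω := fun ω => by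
    rw [tsum_eq_sum (s := Finset.range (N ω)) fun k hk =>
        Set.indicator_of_notMem (show ω ∉ {ω | k < N ω} by simpa using hk) 1,
      Finset.sum_congr rfl fun k hk =>
        Set.indicator_of_mem (show ω ∈ {ω | k < N ω} from Finset.mem_range.1 hk) 1]
    simp
  simp_rw [hsum]
  rw [lintegral_tsum fun k => (measurable_one.indicator (hN k)).aemeasurable]
  simp [lintegral_indicator_one (hN _)]

lemma measure_toReal_eq_sum_inter_fiber {Ω S : Type*} [MeasurableSpace Ω] [Fintype S]
    {μ : Measure Ω} [IsFiniteMeasure μ] {Y : Ω → S} (hY : ∀ y, MeasurableSet {ω | Y ω = y})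
    (A : Set Ω) : (μ A).toReal = ∑ y, (μ (A ∩ {ω | Y ω = y})).toReal := by
  have h : μ A = ∑ y, μ.restrict A (Y ⁻¹' {y}) := by
    simpa using (sum_measure_preimage_singleton (μ := μ.restrict A) Finset.univ
      fun y _ => hY y).symm
  rw [h, ENNReal.toReal_sum fun y _ => measure_ne_top _ _]
  congr! 2 with y
  exact (Measure.restrict_apply (hY y)).trans (congrArg μ (Set.inter_comm _ _))

section Absorbing

variable {Ω S : Type*} {Φ : ℕ → Ω → S} {Sopt : Finset S}

lemma mem_of_absorbing (habs : ∀ ω t, Φ t ω ∈ Sopt → Φ (t + 1) ω ∈ Sopt) {ω : Ω} {j k : ℕ}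
    (hjk : j ≤ k) (hj : Φ j ω ∈ Sopt) : Φ k ω ∈ Sopt := by
  induction k, hjk using Nat.le_induction with
  | base => exact hj
  | succ n _ ih => exact habs ω n ih

lemma lt_hittingTime_iff (habs : ∀ ω t, Φ t ω ∈ Sopt → Φ (t + 1) ω ∈ Sopt) {ω : Ω}
    (hhit : ∃ t, Φ t ω ∈ Sopt) {k : ℕ} : k < hittingTime Φ Sopt ω ↔ Φ k ω ∉ Sopt := by
  refine ⟨fun hk => Nat.notMem_of_lt_sInf hk, fun hk => ?_⟩
  by_contra! hle
  exact hk (mem_of_absorbing habs hle (Nat.sInf_mem hhit))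

-- Paths that never reach `Sopt` have `hittingTime = sInf ∅ = 0`.
lemma setOf_lt_hittingTime (habs : ∀ ω t, Φ t ω ∈ Sopt → Φ (t + 1) ω ∈ Sopt) (k : ℕ) :
    {ω | k < hittingTime Φ Sopt ω} = {ω | Φ k ω ∉ Sopt} \ {ω | ∀ t, Φ t ω ∉ Sopt} := by
  ext ω
  by_cases hhit : ∃ t, Φ t ω ∈ Sopt
  · simp [lt_hittingTime_iff habs hhit, hhit]
  · push Not at hhit
    simp [hittingTime, hhit]

variable [MeasurableSpace Ω] {μ : Measure Ω}

lemma pjoint_eq_zero_of_absorbing (habs : ∀ ω t, Φ t ω ∈ Sopt → Φ (t + 1) ω ∈ Sopt)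
    {t : ℕ} {x y : S} (hx : x ∈ Sopt) (hy : y ∉ Sopt) : pjoint μ Φ t x y = 0 := by
  have : {ω | Φ t ω = x ∧ Φ (t + 1) ω = y} = ∅ :=
    Set.eq_empty_of_forall_notMem fun ω ⟨hxω, hyω⟩ => hy (hyω ▸ habs ω t (hxω ▸ hx))
  simp [pjoint, this]

lemma measurableSet_setOf_notMem {t : ℕ} (hmeas : ∀ x, MeasurableSet {ω | Φ t ω = x}) :
    MeasurableSet {ω | Φ t ω ∉ Sopt} := by
  have : {ω | Φ t ω ∉ Sopt} = (⋃ x ∈ Sopt, {ω | Φ t ω = x})ᶜ := by ext; simp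
  rw [this]
  exact (Finset.measurableSet_biUnion Sopt fun x _ => hmeas x).compl

lemma measure_setOf_forall_notMem_eq_zero
    (hconv : Tendsto (fun t => μ {ω | Φ t ω ∉ Sopt}) atTop (𝓝 0)) :
    μ {ω | ∀ t, Φ t ω ∉ Sopt} = 0 :=
  le_antisymm (ge_of_tendsto' hconv fun t => measure_mono fun _ h => h t) bot_le

lemma lintegral_hittingTime (hmeas : ∀ t x, MeasurableSet {ω | Φ t ω = x})
    (habs : ∀ ω t, Φ t ω ∈ Sopt → Φ (t + 1) ω ∈ Sopt)
    (hconv : Tendsto (fun t => μ {ω | Φ t ω ∉ Sopt}) atTop (𝓝 0)) :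
    ∫⁻ ω, (hittingTime Φ Sopt ω : ℝ≥0∞) ∂μ = ∑' t, μ {ω | Φ t ω ∉ Sopt} := by
  have hnever : MeasurableSet {ω | ∀ t, Φ t ω ∉ Sopt} := by
    simpa only [Set.ofPred_forall] using
      MeasurableSet.iInter fun t => measurableSet_setOf_notMem (hmeas t)
  rw [lintegral_natCast_eq_tsum_measure_lt fun k => setOf_lt_hittingTime habs k ▸
    (measurableSet_setOf_notMem (hmeas k)).diff hnever]
  simp only [setOf_lt_hittingTime habs,
    measure_sdiff_null (measure_setOf_forall_notMem_eq_zero hconv)]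

end Absorbing

section Marginals

variable {Ω S : Type*} [MeasurableSpace Ω] {μ : Measure Ω} [IsFiniteMeasure μ]
  {Φ : ℕ → Ω → S} {t : ℕ}

lemma pstate_eq_sum_pjoint [Fintype S] (hmeas : ∀ y, MeasurableSet {ω | Φ (t + 1) ω = y})
    (x : S) : pstate μ Φ t x = ∑ y, pjoint μ Φ t x y :=
  measure_toReal_eq_sum_inter_fiber hmeas _

lemma pstate_succ_eq_sum_pjoint [Fintype S] (hmeas : ∀ x, MeasurableSet {ω | Φ t ω = x})
    (y : S) : pstate μ Φ (t + 1) y = ∑ x, pjoint μ Φ t x y := by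
  rw [pstate, measure_toReal_eq_sum_inter_fiber hmeas]
  simp only [Set.inter_comm {ω | Φ (t + 1) ω = y}]
  rfl

lemma pjoint_le_pstate (x y : S) : pjoint μ Φ t x y ≤ pstate μ Φ t x :=
  ENNReal.toReal_mono (measure_ne_top μ _) (measure_mono fun _ h => h.1)

lemma pstate_le_measure_notMem {Sopt : Finset S} {x : S} (hx : x ∉ Sopt) :
    pstate μ Φ t x ≤ (μ {ω | Φ t ω ∉ Sopt}).toReal :=
  ENNReal.toReal_mono (measure_ne_top μ _)
    (measure_mono fun ω (h : Φ t ω = x) => show Φ t ω ∉ Sopt from h ▸ hx)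

lemma tendsto_expectedDist_zero [Fintype S] {Sopt : Finset S} {d : S → ℝ}
    (hd0 : ∀ x ∈ Sopt, d x = 0)
    (hconv : Tendsto (fun t => μ {ω | Φ t ω ∉ Sopt}) atTop (𝓝 0)) :
    Tendsto (expectedDist μ Φ d) atTop (𝓝 0) := by
  have hP : Tendsto (fun t => (μ {ω | Φ t ω ∉ Sopt}).toReal) atTop (𝓝 0) := by
    simpa [Function.comp_def] using (ENNReal.tendsto_toReal ENNReal.zero_ne_top).comp hconv
  have hterm : ∀ x, Tendsto (fun t => d x * pstate μ Φ t x) atTop (𝓝 0) := fun x => by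
    by_cases hx : x ∈ Sopt
    · simp [hd0 x hx]
    · simpa [pstate] using ((squeeze_zero (fun t => ENNReal.toReal_nonneg)
        (fun t => pstate_le_measure_notMem hx) hP).const_mul (d x))
  have hsum := tendsto_finsetSum Finset.univ fun x _ => hterm x
  rwa [Finset.sum_const_zero] at hsum

end Marginals

section Drift

variable {Ω S : Type*} [MeasurableSpace Ω] [Fintype S] [DecidableEq S] {μ : Measure Ω}
  [IsFiniteMeasure μ] {Φ : ℕ → Ω → S} {Sopt : Finset S} {d : S → ℝ} {t : ℕ}

lemma drift_mul_pstate (x : S) :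
    drift μ Φ d t x * pstate μ Φ t x = ∑ y, (d x - d y) * pjoint μ Φ t x y := by
  rw [drift, Finset.sum_mul]
  refine Finset.sum_congr rfl fun y _ => ?_
  rw [mul_assoc]
  congr 1
  -- a null state carries no transitions, so the `0 / 0 = 0` convention is harmless
  refine div_mul_cancel_of_imp fun h => le_antisymm ?_ ENNReal.toReal_nonneg
  exact h ▸ pjoint_le_pstate x y

lemma expectedDist_sub_succ (hmeas : ∀ t x, MeasurableSet {ω | Φ t ω = x}) :
    expectedDist μ Φ d t - expectedDist μ Φ d (t + 1)
      = ∑ x, drift μ Φ d t x * pstate μ Φ t x := by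
  simp only [drift_mul_pstate]
  simp only [expectedDist, pstate_eq_sum_pjoint (hmeas (t + 1)),
    pstate_succ_eq_sum_pjoint (hmeas t), Finset.mul_sum, sub_mul, Finset.sum_sub_distrib]
  rw [Finset.sum_comm (f := fun y x => d y * pjoint μ Φ t x y)]

lemma drift_mul_pstate_eq_zero_of_mem (habs : ∀ ω t, Φ t ω ∈ Sopt → Φ (t + 1) ω ∈ Sopt)
    (hd0 : ∀ x ∈ Sopt, d x = 0) {x : S} (hx : x ∈ Sopt) :
    drift μ Φ d t x * pstate μ Φ t x = 0 := by
  rw [drift_mul_pstate]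
  refine Finset.sum_eq_zero fun y _ => ?_
  by_cases hy : y ∈ Sopt
  · simp [hd0 x hx, hd0 y hy]
  · simp [pjoint_eq_zero_of_absorbing habs hx hy]

lemma avgDrift_mul_measure_notMem :
    avgDrift μ Φ Sopt d t * (μ {ω | Φ t ω ∉ Sopt}).toReal
      = ∑ x ∈ Soptᶜ, drift μ Φ d t x * pstate μ Φ t x := by
  rw [avgDrift]
  split_ifs with h
  · rw [zero_mul, eq_comm]
    refine Finset.sum_eq_zero fun x hx => ?_
    have hx0 : pstate μ Φ t x = 0 :=
      le_antisymm (h ▸ pstate_le_measure_notMem (Finset.mem_compl.1 hx)) ENNReal.toReal_nonneg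
    rw [hx0, mul_zero]
  · rw [Finset.sum_mul]
    exact Finset.sum_congr rfl fun x _ => by field_simp

lemma expectedDist_sub_succ_le (hmeas : ∀ t x, MeasurableSet {ω | Φ t ω = x})
    (habs : ∀ ω t, Φ t ω ∈ Sopt → Φ (t + 1) ω ∈ Sopt) (hd0 : ∀ x ∈ Sopt, d x = 0) {c : ℝ}
    (hdrift : avgDrift μ Φ Sopt d t ≤ c) :
    expectedDist μ Φ d t - expectedDist μ Φ d (t + 1) ≤ c * (μ {ω | Φ t ω ∉ Sopt}).toReal := by
  calc expectedDist μ Φ d t - expectedDist μ Φ d (t + 1)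
      = ∑ x ∈ Soptᶜ, drift μ Φ d t x * pstate μ Φ t x := by
        rw [expectedDist_sub_succ hmeas, ← Finset.sum_add_sum_compl Sopt,
          Finset.sum_eq_zero fun x hx => drift_mul_pstate_eq_zero_of_mem habs hd0 hx, zero_add]
    _ = avgDrift μ Φ Sopt d t * (μ {ω | Φ t ω ∉ Sopt}).toReal :=
        avgDrift_mul_measure_notMem.symm
    _ ≤ c * (μ {ω | Φ t ω ∉ Sopt}).toReal := by gcongr

end Drift

theorem average_drift_lower_bound_general
    {Ω S : Type*} [Fintype S] [DecidableEq S] [MeasurableSpace Ω]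
    (μ : Measure Ω) [IsProbabilityMeasure μ]
    (Φ : ℕ → Ω → S) (Sopt : Finset S) (d : S → ℝ) (c : ℝ)
    (hmeas : ∀ t x, MeasurableSet {ω | Φ t ω = x})
    (habs : ∀ ω t, Φ t ω ∈ Sopt → Φ (t + 1) ω ∈ Sopt)
    (hd0 : ∀ x, d x = 0 ↔ x ∈ Sopt)
    (hconv : Tendsto (fun t => μ {ω | Φ t ω ∉ Sopt}) atTop (nhds 0))
    (hc : 0 < c)
    (hdrift : ∀ t, avgDrift μ Φ Sopt d t ≤ c) :
    ∫⁻ ω, (hittingTime Φ Sopt ω : ENNReal) ∂μ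
      ≥ ENNReal.ofReal ((∑ x : S, d x * pstate μ Φ 0 x) / c) := by
  have hdopt : ∀ x ∈ Sopt, d x = 0 := fun x hx => (hd0 x).2 hx
  rw [ge_iff_le, lintegral_hittingTime hmeas habs hconv]
  exact ofReal_div_le_tsum_of_sub_succ_le hc (tendsto_expectedDist_zero hdopt hconv)
    (fun t => measure_ne_top μ _) fun t => expectedDist_sub_succ_le hmeas habs hdopt (hdrift t)

/-- Average drift theorem (lower bound): if the nonnegative distance `d`
vanishes exactly on the absorbing optimal set, the chain is convergent, and
the average drift is at most `c` (with `c > 0`) at every time, then the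
expected hitting time is at least `E[d(Φ_0)]/c`. -/
theorem average_drift_lower_bound
    {Ω S : Type*} [Fintype S] [DecidableEq S] [MeasurableSpace Ω]
    (μ : Measure Ω) [IsProbabilityMeasure μ]
    (Φ : ℕ → Ω → S) (Sopt : Finset S) (d : S → ℝ) (c : ℝ)
    (hmeas : ∀ t x, MeasurableSet {ω | Φ t ω = x})
    (habs : ∀ ω t, Φ t ω ∈ Sopt → Φ (t + 1) ω ∈ Sopt)
    (hdnn : ∀ x, 0 ≤ d x)
    (hd0 : ∀ x, d x = 0 ↔ x ∈ Sopt)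
    (hconv : Tendsto (fun t => μ {ω | Φ t ω ∉ Sopt}) atTop (nhds 0))
    (hc : 0 < c)
    (hdrift : ∀ t, avgDrift μ Φ Sopt d t ≤ c) :
    ∫⁻ ω, (hittingTime Φ Sopt ω : ENNReal) ∂μ
      ≥ ENNReal.ofReal ((∑ x : S, d x * pstate μ Φ 0 x) / c) :=
  average_drift_lower_bound_general μ Φ Sopt d c hmeas habs hd0 hconv hc hdrift
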